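/- arXiv:2507.12100 — 5 statements merged into one kernel-verified Lean document; each statement's English description precedes it below -/
import Mathlib

section
/- Let B1 and B2 be two disjoint bases of a matroid M, and let C be a chordless directed cycle in the exchange graph D(B1,B2). Then V(C) is an exchangeable set for B1 and B2, i.e., B1 Δ V(C) and B2 Δ V(C) are both bases. -/
/-!
Write `X = V(C) ∩ B1` and `Y = V(C) ∩ B2`. Since `C` is chordless, the exchange edges from `X`
to `Y` are exactly the cycle edges, so they form a perfect matching. For a base `B`, `X ⊆ B` and
`Y` disjoint from `B`, such a matching makes `(B \ X) ∪ Y` a base. It spans: the fundamental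
circuit of the partner `y` of `x ∈ X` meets `X` only in `x`, so `x` lies in the closure of
`(B \ X) + y`. It is independent: `B - x + y` is a base of `M` iff `(E \ B) - y + x` is a base
of `M✶`, so the same argument in `M✶`, with `X` and `Y` swapped, shows that its complement
spans `M✶`.
-/

open Set

variable {α : Type*}

/-- Edge relation of the exchange graph `D(B1,B2)`: there is an edge `(x,y)` from
`x ∈ B_i` to `y ∈ B_j` (`i ≠ j`) whenever `B_i - x + y` is a basis. -/
def ExchEdge (M : Matroid α) (B1 B2 : Set α) (x y : α) : Prop :=
  (x ∈ B1 ∧ y ∈ B2 ∧ M.IsBase (insert y (B1 \ {x}))) ∨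
  (x ∈ B2 ∧ y ∈ B1 ∧ M.IsBase (insert y (B2 \ {x})))

/-- A directed cycle with respect to an edge relation `R`, given as a nonempty
list of pairwise distinct vertices, cyclically consecutive vertices joined by edges. -/
def IsCycle (R : α → α → Prop) (l : List α) : Prop :=
  l ≠ [] ∧ l.Nodup ∧ l.Chain' R ∧ ∀ h : l ≠ [], R (l.getLast h) (l.head h)

/-- `x, y` are cyclically consecutive in the list `l` (i.e. `(x,y)` is an edge of the cycle). -/
def CycEdge (l : List α) (x y : α) : Prop :=
  ∃ i : ℕ, i < l.length ∧ l[i]? = some x ∧ l[(i + 1) % l.length]? = some y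

namespace Matroid

variable {M : Matroid α} {B X Y : Set α} {e f : α}

lemma IsBase.mem_fundCircuit_iff (hB : M.IsBase B) (he : e ∈ B) (hf : f ∈ M.E \ B) :
    e ∈ M.fundCircuit f B ↔ M.IsBase (insert f (B \ {e})) := by
  rw [hB.indep.mem_fundCircuit_iff (by rw [hB.closure_eq]; exact hf.1) hf.2,
    ← insert_sdiff_singleton_comm (ne_of_mem_of_not_mem he hf.2).symm]
  exact ⟨hB.exchange_isBase_of_indep hf.2, IsBase.indep⟩

lemma IsBase.dual_exchange_isBase_iff (hB : M.IsBase B) (he : e ∈ B) (hf : f ∈ M.E \ B) :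
    M✶.IsBase (insert e ((M.E \ B) \ {f})) ↔ M.IsBase (insert f (B \ {e})) := by
  have hBE := hB.subset_ground
  rw [dual_isBase_iff (insert_subset (hBE he) (sdiff_subset.trans sdiff_subset))]
  convert Iff.rfl using 2
  ext a
  have := @hBE a
  grind

lemma IsBase.spanning_sdiff_union (hB : M.IsBase B) (hYB : Disjoint Y B)
    (hX : ∀ x ∈ X, ∃ y ∈ Y, M.IsBase (insert y (B \ {x})))
    (hY : ∀ y ∈ Y, ∃! x, x ∈ X ∧ M.IsBase (insert y (B \ {x}))) :
    M.Spanning (B \ X ∪ Y) := by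
  have hYE : Y ⊆ M.E := fun y hy ↦
    have ⟨_, ⟨_, hxy⟩, _⟩ := hY y hy
    hxy.subset_ground (mem_insert y _)
  have hSE : B \ X ∪ Y ⊆ M.E := union_subset (sdiff_subset.trans hB.subset_ground) hYE
  rw [spanning_iff_ground_subset_closure hSE, ← hB.closure_eq]
  refine M.closure_subset_closure_of_subset_closure fun b hb ↦ ?_
  by_cases hbX : b ∈ X
  swap
  · exact M.subset_closure _ hSE (.inl ⟨hb, hbX⟩)
  obtain ⟨y, hy, hby⟩ := hX b hbX
  have hyB : y ∉ B := hYB.notMem_of_mem_left hy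
  -- The fundamental circuit of `y` meets `X` only in `b`, the unique partner of `y`.
  have hCsub : M.fundCircuit y B \ {y} ⊆ insert b (B \ X) := by
    rintro a ⟨haC, hay⟩
    have haB : a ∈ B := (M.fundCircuit_subset_insert y B haC).resolve_left hay
    by_cases haX : a ∈ X
    · exact .inl <| (hY y hy).unique
        ⟨haX, (hB.mem_fundCircuit_iff haB ⟨hYE hy, hyB⟩).1 haC⟩ ⟨hbX, hby⟩
    · exact .inr ⟨haB, haX⟩
  have hy_mem : y ∈ M.closure (insert b (B \ X)) :=
    M.closure_subset_closure hCsub <| (hB.fundCircuit_isCircuit (hYE hy) hyB)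
      |>.mem_closure_sdiff_singleton_of_mem (M.mem_fundCircuit y B)
  have hy_notMem : y ∉ M.closure (B \ X) := fun h ↦
    ((hB.indep.sdiff {b}).notMem_closure_iff_of_notMem (fun h ↦ hyB h.1) (hYE hy)).2 hby.indep
      (M.closure_subset_closure (sdiff_subset_sdiff_right (singleton_subset_iff.2 hbX)) h)
  exact M.closure_subset_closure (insert_subset (.inr hy) subset_union_left)
    (M.closure_exchange ⟨hy_mem, hy_notMem⟩).1

lemma IsBase.sdiff_union_isBase (hB : M.IsBase B) (hXB : X ⊆ B) (hYB : Disjoint Y B)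
    (hX : ∀ x ∈ X, ∃! y, y ∈ Y ∧ M.IsBase (insert y (B \ {x})))
    (hY : ∀ y ∈ Y, ∃! x, x ∈ X ∧ M.IsBase (insert y (B \ {x}))) :
    M.IsBase (B \ X ∪ Y) := by
  have hYE : Y ⊆ M.E := fun y hy ↦
    have ⟨_, ⟨_, hxy⟩, _⟩ := hY y hy
    hxy.subset_ground (mem_insert y _)
  have hdual : ∀ y ∈ Y, ∀ x ∈ X, M✶.IsBase (insert x ((M.E \ B) \ {y})) ↔
      M.IsBase (insert y (B \ {x})) := fun y hy x hx ↦
    hB.dual_exchange_isBase_iff (hXB hx) ⟨hYE hy, hYB.notMem_of_mem_left hy⟩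
  have hsp := hB.spanning_sdiff_union hYB (fun x hx ↦ (hX x hx).exists) hY
  have hsp' : M✶.Spanning ((M.E \ B) \ Y ∪ X) := by
    refine hB.compl_isBase_dual.spanning_sdiff_union (disjoint_sdiff_right.mono_left hXB)
      (fun y hy ↦ ?_) (fun x hx ↦ ?_)
    · obtain ⟨x, ⟨hx, hxy⟩, -⟩ := hY y hy
      exact ⟨x, hx, (hdual y hy x hx).2 hxy⟩
    · exact (existsUnique_congr fun y ↦ and_congr_right fun hy ↦ hdual y hy x hx).2 (hX x hx)
  refine hsp.isBase_of_indep ?_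
  have hcompl : M.E \ ((M.E \ B) \ Y ∪ X) = B \ X ∪ Y := by
    ext a
    have : a ∈ B → a ∈ M.E := fun h ↦ hB.subset_ground h
    have := @hYE a
    have := @hXB a
    have := hYB.notMem_of_mem_left (a := a)
    simp only [mem_sdiff, mem_union]
    tauto
  simpa [hcompl] using hsp'.compl_coindep

end Matroid

section ExchangeGraph

variable {M : Matroid α} {B1 B2 : Set α} {x y : α}

lemma exchEdge_comm (M : Matroid α) (B1 B2 : Set α) : ExchEdge M B1 B2 = ExchEdge M B2 B1 := by
  ext x y
  exact or_comm

lemma exchEdge_iff_of_mem_left (hdisj : Disjoint B1 B2) (hx : x ∈ B1) :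
    ExchEdge M B1 B2 x y ↔ y ∈ B2 ∧ M.IsBase (insert y (B1 \ {x})) := by
  simp [ExchEdge, hx, hdisj.notMem_of_mem_left hx]

lemma exchEdge_iff_of_mem_right (hdisj : Disjoint B1 B2) (hy : y ∈ B2) :
    ExchEdge M B1 B2 x y ↔ x ∈ B1 ∧ M.IsBase (insert y (B1 \ {x})) := by
  simp [ExchEdge, hy, hdisj.notMem_of_mem_right hy]

lemma isBase_symmDiff_of_existsUnique_exchEdge (hB1 : M.IsBase B1) (hdisj : Disjoint B1 B2)
    {V : Set α} (hout : ∀ x ∈ V, ∃! y, y ∈ V ∧ ExchEdge M B1 B2 x y)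
    (hin : ∀ y ∈ V, ∃! x, x ∈ V ∧ ExchEdge M B1 B2 x y) :
    M.IsBase (symmDiff B1 V) := by
  have hV : V ⊆ B1 ∪ B2 := fun x hx ↦
    have ⟨_, ⟨_, hxy⟩, _⟩ := hout x hx
    hxy.elim (fun h ↦ .inl h.1) (fun h ↦ .inr h.1)
  have hsymm : symmDiff B1 V = B1 \ (V ∩ B1) ∪ V ∩ B2 := by
    ext a
    have : a ∈ V → a ∈ B1 ∨ a ∈ B2 := fun h ↦ hV h
    have := hdisj.notMem_of_mem_left (a := a)
    simp only [mem_symmDiff, mem_sdiff, mem_union, mem_inter_iff]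
    tauto
  rw [hsymm]
  refine hB1.sdiff_union_isBase inter_subset_right (hdisj.symm.mono_left inter_subset_right)
    (fun x hx ↦ ?_) (fun y hy ↦ ?_)
  · refine (existsUnique_congr fun y ↦ ?_).1 (hout x hx.1)
    rw [exchEdge_iff_of_mem_left hdisj hx.2, mem_inter_iff, and_assoc]
  · refine (existsUnique_congr fun x ↦ ?_).1 (hin y hy.1)
    rw [exchEdge_iff_of_mem_right hdisj hy.2, mem_inter_iff, and_assoc]

end ExchangeGraph

section Cycle

variable {R : α → α → Prop} {l : List α} {x y : α}

lemma IsCycle.rel_next [DecidableEq α] (h : IsCycle R l) (hx : x ∈ l) : R x (l.next x hx) := by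
  obtain ⟨hne, hnodup, hchain, hlast⟩ := h
  obtain ⟨i, hi, rfl⟩ := List.getElem_of_mem hx
  rw [List.next_getElem l hnodup i hi]
  rcases Nat.lt_or_ge (i + 1) l.length with hlt | hge
  · simpa only [Nat.mod_eq_of_lt hlt] using List.isChain_iff_getElem.1 hchain i hlt
  · obtain rfl : i = l.length - 1 := by omega
    have := hlast hne
    rw [List.getLast_eq_getElem, List.head_eq_getElem] at this
    simpa only [Nat.sub_add_cancel (List.length_pos_iff.2 hne), Nat.mod_self] using this

lemma CycEdge.eq_next [DecidableEq α] (hl : l.Nodup) (h : CycEdge l x y) (hx : x ∈ l) :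
    y = l.next x hx := by
  obtain ⟨i, hi, hix, hiy⟩ := h
  obtain rfl : l[i] = x := by simpa [hi] using hix
  rw [List.next_getElem l hl i hi]
  simpa [Nat.mod_lt _ (Nat.zero_lt_of_lt hi)] using hiy.symm

lemma IsCycle.existsUnique_out (h : IsCycle R l)
    (hchordless : ∀ x ∈ l, ∀ y ∈ l, R x y → CycEdge l x y) (hx : x ∈ l) :
    ∃! y, y ∈ l ∧ R x y := by
  classical
  exact ⟨l.next x hx, ⟨List.next_mem _ _ hx, h.rel_next hx⟩,
    fun y ⟨hy, hxy⟩ ↦ (hchordless x hx y hy hxy).eq_next h.2.1 hx⟩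

lemma IsCycle.existsUnique_in (h : IsCycle R l)
    (hchordless : ∀ x ∈ l, ∀ y ∈ l, R x y → CycEdge l x y) (hy : y ∈ l) :
    ∃! x, x ∈ l ∧ R x y := by
  classical
  refine ⟨l.prev y hy, ⟨List.prev_mem _ _ hy, ?_⟩, fun x ⟨hx, hxy⟩ ↦ ?_⟩
  · simpa only [List.next_prev l h.2.1] using h.rel_next (List.prev_mem _ _ hy)
  · obtain rfl := (hchordless x hx y hy hxy).eq_next h.2.1 hx
    exact (List.prev_next l h.2.1 x hx).symm

end Cycle

/-- If `B1, B2` are disjoint bases and `C` is a chordless cycle in the exchange graph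
`D(B1,B2)`, then `V(C)` is an exchangeable set for `B1` and `B2`. -/
theorem chordless_cycle_exchangeable (M : Matroid α) (B1 B2 : Set α)
    (hB1 : M.IsBase B1) (hB2 : M.IsBase B2) (hdisj : Disjoint B1 B2)
    (l : List α) (hcyc : IsCycle (ExchEdge M B1 B2) l)
    (hchordless : ∀ x ∈ l, ∀ y ∈ l, ExchEdge M B1 B2 x y → CycEdge l x y) :
    M.IsBase (symmDiff B1 {x | x ∈ l}) ∧ M.IsBase (symmDiff B2 {x | x ∈ l}) := by
  have hout := fun x (hx : x ∈ l) ↦ hcyc.existsUnique_out hchordless hx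
  have hin := fun y (hy : y ∈ l) ↦ hcyc.existsUnique_in hchordless hy
  refine ⟨isBase_symmDiff_of_existsUnique_exchEdge hB1 hdisj hout hin, ?_⟩
  rw [exchEdge_comm] at hout hin
  exact isBase_symmDiff_of_existsUnique_exchEdge hB2 hdisj.symm hout hin
end

section
/- Let B1 and B2 be two disjoint bases of a matroid M, let C be a directed cycle in the exchange graph D(B1,B2), and let t ∈ V(C). Then there exists an exchangeable set U ⊆ V(C) for B1 and B2 with t ∈ U. Moreover, if no cycle C' satisfies t ∈ V(C') ⊊ V(C), then V(C) itself is exchangeable. -/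
variable {α : Type*}

/-- `X` is an exchangeable set for the disjoint bases `B1` and `B2`. -/
def ExchangeableSet (M : Matroid α) (B1 B2 : Set α) (X : Set α) : Prop :=
  X ⊆ B1 ∪ B2 ∧ M.IsBase (symmDiff B1 X) ∧ M.IsBase (symmDiff B2 X)

/-!
Rotate the cycle so that `t` comes first. If `V(C)` is minimal, the cycle has no edge `u → v`
jumping forward over some of its vertices, since the shortcut would be a smaller cycle through
`t`; the same holds for the cycle rotated so that `t` comes last. Cut either rotation into
consecutive pairs: each pair is an edge exchanging the base that contains its first vertex, and
no first element of a pair can be exchanged against the second element of a later pair. Such a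
triangular system of single exchanges can be carried out simultaneously, so `B₁ Δ V(C)` and
`B₂ Δ V(C)` are bases. The first claim follows by applying this to a cycle through `t` whose
vertex set is minimal inside `V(C)`.
-/

open Set

namespace Matroid

variable {M : Matroid α}

lemma mem_closure_insert_iff_of_notMem_closure {X S : Set α} {y e : α} (hSX : S ⊆ X)
    (hy : y ∉ M.closure X) (he : e ∈ M.closure X) :
    e ∈ M.closure (insert y S) ↔ e ∈ M.closure S := by
  refine ⟨fun h ↦ by_contra fun heS ↦ hy ?_,
    fun h ↦ M.closure_subset_closure (subset_insert y S) h⟩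
  rw [← closure_insert_eq_of_mem_closure he]
  exact M.closure_subset_closure (insert_subset_insert hSX) (M.closure_exchange ⟨h, heS⟩).1

lemma IsBase.isBase_insert_sdiff_iff {B : Set α} {x y : α} (hB : M.IsBase B) (hx : x ∈ B)
    (hy : y ∈ M.E) : M.IsBase (insert y (B \ {x})) ↔ y ∉ M.closure (B \ {x}) := by
  refine ⟨fun h hcl ↦ ?_, fun h ↦ hB.exchange_base_of_notMem_closure hx h hy⟩
  have hyB : y ∈ B \ {x} := ((hB.indep.sdiff _).mem_closure_iff'.1 hcl).2 h.indep
  have := h.eq_of_subset_isBase hB (insert_subset hyB.1 sdiff_subset)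
  rw [insert_eq_of_mem hyB] at this
  exact (this.symm ▸ hx : x ∈ B \ {x}).2 rfl

-- Both sides say that `e ∉ cl((B - x) - z)`.
lemma IsBase.exchange_isBase_iff_of_mem_closure {B : Set α} {x y e z : α} (hB : M.IsBase B)
    (hx : x ∈ B) (hxy : M.IsBase (insert y (B \ {x}))) (hyB : y ∉ B)
    (he : e ∈ M.closure (B \ {x})) (hz : z ∈ B) (hzx : z ≠ x) :
    M.IsBase (insert e (insert y (B \ {x}) \ {z})) ↔ M.IsBase (insert e (B \ {z})) := by
  have heE := mem_ground_of_mem_closure he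
  have hy : y ∉ M.closure (B \ {x}) :=
    (hB.isBase_insert_sdiff_iff hx (hxy.subset_ground (mem_insert y _))).1 hxy
  have hyz : y ∉ ({z} : Set α) := fun h ↦ hyB (h ▸ hz)
  have hB_z : B \ {z} = insert x ((B \ {x}) \ {z}) := by
    rw [sdiff_sdiff_comm, insert_sdiff_singleton,
      insert_eq_of_mem (show x ∈ B \ {z} from ⟨hx, hzx.symm⟩)]
  rw [hxy.isBase_insert_sdiff_iff (mem_insert_of_mem y ⟨hz, hzx⟩) heE,
    hB.isBase_insert_sdiff_iff hz heE, insert_sdiff_of_notMem _ hyz, hB_z,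
    mem_closure_insert_iff_of_notMem_closure sdiff_subset hy he,
    mem_closure_insert_iff_of_notMem_closure sdiff_subset
      (hB.indep.notMem_closure_sdiff_of_mem hx) he]

theorem IsBase.isBase_sdiff_union_of_pairwise {B : Set α} {p : List (α × α)}
    (hB : M.IsBase B) (hp : ∀ q ∈ p, q.1 ∈ B ∧ q.2 ∉ B)
    (hdiag : ∀ q ∈ p, M.IsBase (insert q.2 (B \ {q.1})))
    (htri : p.Pairwise fun q q' ↦ ¬ M.IsBase (insert q'.2 (B \ {q.1}))) :
    M.IsBase (B \ Prod.fst '' {q | q ∈ p} ∪ Prod.snd '' {q | q ∈ p}) := by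
  induction p generalizing B with
  | nil => simpa using hB
  | cons xy p ih =>
    obtain ⟨x, y⟩ := xy
    obtain ⟨hhead, htri⟩ := List.pairwise_cons.1 htri
    obtain ⟨hx, hyB⟩ := hp _ List.mem_cons_self
    have hxy := hdiag _ List.mem_cons_self
    have hcl : ∀ q ∈ p, q.2 ∈ M.closure (B \ {x}) := fun q hq ↦ by
      have hqE := (hdiag q (List.mem_cons_of_mem _ hq)).subset_ground (mem_insert _ _)
      simpa [hB.isBase_insert_sdiff_iff hx hqE] using hhead q hq
    have hne : ∀ q ∈ p, q.1 ≠ x := fun q hq h ↦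
      hhead q hq (h ▸ hdiag q (List.mem_cons_of_mem _ hq))
    -- Every later `q.2` lies in `cl(B - x)`, so exchanging `x` for `y` first changes none of the
    -- conditions on the later pairs.
    have hswap : ∀ q ∈ p, ∀ z ∈ B, z ≠ x →
        (M.IsBase (insert q.2 (insert y (B \ {x}) \ {z})) ↔ M.IsBase (insert q.2 (B \ {z}))) :=
      fun q hq z hz hzx ↦ hB.exchange_isBase_iff_of_mem_closure hx hxy hyB (hcl q hq) hz hzx
    have h := ih (B := insert y (B \ {x})) hxy
      (fun q hq ↦ ⟨mem_insert_of_mem _ ⟨(hp q (List.mem_cons_of_mem _ hq)).1, hne q hq⟩, ?_⟩)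
      (fun q hq ↦ (hswap q hq _ (hp q (List.mem_cons_of_mem _ hq)).1 (hne q hq)).2
        (hdiag q (List.mem_cons_of_mem _ hq)))
      (htri.imp_of_mem fun hq hq' h ↦ mt (hswap _ hq' _ (hp _ (List.mem_cons_of_mem _ hq)).1
        (hne _ hq)).1 h)
    · have hy_fst : ∀ b, (y, b) ∉ p := fun b hb ↦ hyB (hp _ (List.mem_cons_of_mem _ hb)).1
      convert h using 1
      ext z
      by_cases hzy : z = y
      · subst hzy
        simp [hy_fst]
      · simp [Ne.symm hzy, and_assoc, eq_comm]
    · rintro (h | h)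
      · exact hhead q hq (h ▸ hxy)
      · exact (hp q (List.mem_cons_of_mem _ hq)).2 h.1

end Matroid

section Cycles

variable {R : α → α → Prop}

lemma isCycle_iff_cycleChain {l : List α} :
    IsCycle R l ↔ l ≠ [] ∧ l.Nodup ∧ Cycle.Chain R (l : Cycle α) := by
  cases l with
  | nil => simp [IsCycle]
  | cons a l =>
    change _ ∧ _ ∧ List.IsChain R (a :: l) ∧ _ ↔ _
    rw [Cycle.chain_coe_cons, ← List.cons_append, List.isChain_append]
    simp [List.getLast?_eq_some_getLast]

lemma IsCycle.append_comm {l₁ l₂ : List α} (h : IsCycle R (l₁ ++ l₂)) :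
    IsCycle R (l₂ ++ l₁) := by
  have hrot : (l₁ ++ l₂) ~r (l₂ ++ l₁) := List.isRotated_append
  rw [isCycle_iff_cycleChain] at h ⊢
  exact ⟨by simpa [and_comm] using h.1, hrot.nodup_iff.1 h.2.1, Cycle.coe_eq_coe.2 hrot ▸ h.2.2⟩

lemma IsCycle.exists_cons {l : List α} {x : α} (h : IsCycle R l) (hx : x ∈ l) :
    ∃ r, IsCycle R (x :: r) ∧ {y | y ∈ x :: r} = {y | y ∈ l} := by
  obtain ⟨s, u, rfl⟩ := List.append_of_mem hx
  refine ⟨u ++ s, by simpa using h.append_comm, ?_⟩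
  ext y
  simp only [mem_ofPred_eq, List.mem_cons, List.mem_append]
  tauto

lemma IsCycle.shortcut {A M Z : List α} {a b : α} (h : IsCycle R (A ++ a :: (M ++ b :: Z)))
    (hab : R a b) : IsCycle R (A ++ a :: b :: Z) := by
  obtain ⟨hne, hnd, hch, hcl⟩ := h
  refine ⟨by simp, hnd.sublist ?_, ?_, fun _ ↦ ?_⟩
  · exact ((List.sublist_append_right M _).cons_cons a).append_left A
  · obtain ⟨hA, hMZ⟩ := List.isChain_split.1 hch
    exact List.isChain_append_cons_cons.2 ⟨hA, hab, (List.isChain_cons_split.1 hMZ).2⟩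
  · simpa [List.getLast_append, List.head_append] using hcl hne

lemma setOf_mem_ssubset_of_nodup {A M Z : List α} {a b : α} (hnd : (A ++ a :: (M ++ b :: Z)).Nodup)
    (hM : M ≠ []) : {x | x ∈ A ++ a :: b :: Z} ⊂ {x | x ∈ A ++ a :: (M ++ b :: Z)} := by
  refine ssubset_iff_subset_ne.2 ⟨fun x hx ↦ ?_, fun heq ↦ ?_⟩
  · simp only [mem_ofPred_eq, List.mem_append, List.mem_cons] at hx ⊢
    tauto
  obtain ⟨m, hm⟩ := List.exists_mem_of_ne_nil M hM
  have : m ∈ {x | x ∈ A ++ a :: b :: Z} :=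
    heq ▸ (show m ∈ A ++ a :: (M ++ b :: Z) by simp [hm])
  simp only [List.nodup_append, List.nodup_cons, List.mem_append, List.mem_cons, not_or, ne_eq,
    forall_eq_or_imp, mem_ofPred_eq] at hnd this
  rcases this with h | rfl | rfl | h
  · exact (hnd.2.2 m h).2 m (Or.inl hm) rfl
  · exact hnd.2.1.1.1 hm
  · exact (hnd.2.1.2.2.2 _ hm).1 rfl
  · exact (hnd.2.1.2.2.2 _ hm).2 m h rfl

def NoShortcut (R : α → α → Prop) (l : List α) : Prop :=
  ∀ A M Z a b, l = A ++ a :: (M ++ b :: Z) → M ≠ [] → ¬ R a b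

lemma NoShortcut.of_append_right {l₁ l₂ : List α} (h : NoShortcut R (l₁ ++ l₂)) :
    NoShortcut R l₂ :=
  fun A M Z a b hl ↦ h (l₁ ++ A) M Z a b (by rw [hl, List.append_assoc])

lemma IsCycle.noShortcut_of_minimal {l : List α} {t : α} (hc : IsCycle R l)
    (hmin : ¬∃ l', IsCycle R l' ∧ t ∈ l' ∧ {x | x ∈ l'} ⊂ {x | x ∈ l})
    (ht : l.head? = some t ∨ l.getLast? = some t) : NoShortcut R l := by
  rintro A M Z a b rfl hM hab
  refine hmin ⟨_, hc.shortcut hab, ?_, setOf_mem_ssubset_of_nodup hc.2.1 hM⟩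
  rcases ht with ht | ht
  · cases A <;> simp_all
  · rw [List.getLast?_append_cons, ← List.cons_append, List.getLast?_append_cons] at ht
    simp [List.mem_of_getLast? ht]

lemma NoShortcut.pairwise {p : List (α × α)} (h : NoShortcut R (p.flatMap fun q ↦ [q.1, q.2])) :
    p.Pairwise fun q q' ↦ ¬ R q.1 q'.2 := by
  induction p with
  | nil => exact .nil
  | cons q p ih =>
    refine .cons (fun q' hq' ↦ ?_) (ih (NoShortcut.of_append_right (l₁ := [q.1, q.2]) h))
    obtain ⟨P, P', rfl⟩ := List.append_of_mem hq'
    exact h [] (q.2 :: ((P.flatMap fun q ↦ [q.1, q.2]) ++ [q'.1]))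
      (P'.flatMap fun q ↦ [q.1, q.2]) q.1 q'.2 (by simp) (by simp)

end Cycles

section ExchangeGraph

variable {M : Matroid α} {B B' : Set α} {x y : α}

lemma exchEdge_comm_s2 : ExchEdge M B' B = ExchEdge M B B' := by
  funext x y
  exact propext or_comm

lemma ExchEdge.mem_union (h : ExchEdge M B B' x y) : x ∈ B ∪ B' := by
  rcases h with ⟨hx, -⟩ | ⟨hx, -⟩
  exacts [Or.inl hx, Or.inr hx]

lemma ExchEdge.isBase_of_left_mem (hdisj : Disjoint B B') (h : ExchEdge M B B' x y)
    (hx : x ∈ B) : y ∈ B' ∧ M.IsBase (insert y (B \ {x})) := by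
  rcases h with ⟨-, h⟩ | ⟨hx', -⟩
  exacts [h, absurd hx' (hdisj.notMem_of_mem_left hx)]

lemma ExchEdge.left_mem_of_right_mem (hdisj : Disjoint B B') (h : ExchEdge M B B' x y)
    (hy : y ∈ B) : x ∈ B' := by
  rcases h with ⟨-, hy', -⟩ | ⟨hx, -⟩
  exacts [absurd hy' (hdisj.notMem_of_mem_left hy), hx]

lemma IsCycle.subset_union {l : List α} (hc : IsCycle (ExchEdge M B B') l) :
    {x | x ∈ l} ⊆ B ∪ B' := by
  intro x hx
  obtain ⟨r, hr, -⟩ := hc.exists_cons hx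
  cases r with
  | nil => exact (hr.2.2.2 (List.cons_ne_nil x [])).mem_union
  | cons y r => exact (List.isChain_cons_cons.1 hr.2.2.1).1.mem_union

theorem exists_eq_flatMap_of_isChain (hdisj : Disjoint B B') : ∀ (a : α) (l : List α),
    (a :: l).IsChain (ExchEdge M B B') → a ∈ B → (a :: l).getLast (List.cons_ne_nil a l) ∈ B' →
    ∃ p : List (α × α), a :: l = p.flatMap (fun q ↦ [q.1, q.2]) ∧
      ∀ q ∈ p, q.1 ∈ B ∧ q.2 ∈ B' ∧ M.IsBase (insert q.2 (B \ {q.1}))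
  | a, [], _, ha, hlast => absurd hlast (hdisj.notMem_of_mem_left ha)
  | a, [b], h, ha, _ =>
    ⟨[(a, b)], rfl, by simpa [ha] using (List.isChain_pair.1 h).isBase_of_left_mem hdisj ha⟩
  | a, b :: c :: l, h, ha, hlast => by
    obtain ⟨hab, hbc, h⟩ : ExchEdge M B B' a b ∧ ExchEdge M B B' b c ∧
        (c :: l).IsChain (ExchEdge M B B') := by
      simpa using h
    obtain ⟨hb, hbase⟩ := hab.isBase_of_left_mem hdisj ha
    have hc : c ∈ B :=
      ((exchEdge_comm_s2 ▸ hbc : ExchEdge M B' B b c).isBase_of_left_mem hdisj.symm hb).1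
    obtain ⟨p, hp, hpB⟩ := exists_eq_flatMap_of_isChain hdisj c l h hc (by simpa using hlast)
    exact ⟨(a, b) :: p, by simp [hp], by simpa [ha, hb, hbase] using hpB⟩

lemma symmDiff_union_of_subset_of_disjoint {F S : Set α} (hF : F ⊆ B) (hS : Disjoint B S) :
    symmDiff B (F ∪ S) = B \ F ∪ S := by
  ext x
  have := @hF x
  have := hS.notMem_of_mem_left (a := x)
  simp only [mem_symmDiff, mem_union, mem_sdiff]
  tauto

theorem isBase_symmDiff_of_noShortcut (hB : M.IsBase B) (hdisj : Disjoint B B') {a : α}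
    {l : List α} (hc : IsCycle (ExchEdge M B B') (a :: l)) (ha : a ∈ B)
    (hns : NoShortcut (ExchEdge M B B') (a :: l)) : M.IsBase (symmDiff B {x | x ∈ a :: l}) := by
  obtain ⟨p, hp, hpB⟩ := exists_eq_flatMap_of_isChain hdisj a l hc.2.2.1 ha
    ((hc.2.2.2 (List.cons_ne_nil a l)).left_mem_of_right_mem hdisj ha)
  rw [hp] at hns ⊢
  have hV : {x | x ∈ p.flatMap fun q ↦ [q.1, q.2]} =
      Prod.fst '' {q | q ∈ p} ∪ Prod.snd '' {q | q ∈ p} := by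
    ext x
    simp only [mem_ofPred_eq, List.mem_flatMap, List.mem_cons, List.not_mem_nil, or_false,
      mem_union, mem_image, Prod.exists]
    grind
  rw [hV, symmDiff_union_of_subset_of_disjoint (by rintro _ ⟨q, hq, rfl⟩; exact (hpB q hq).1)
    (disjoint_right.2 (by rintro _ ⟨q, hq, rfl⟩; exact hdisj.notMem_of_mem_right (hpB q hq).2.1))]
  exact hB.isBase_sdiff_union_of_pairwise
    (fun q hq ↦ ⟨(hpB q hq).1, hdisj.notMem_of_mem_right (hpB q hq).2.1⟩)
    (fun q hq ↦ (hpB q hq).2.2)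
    (hns.pairwise.imp_of_mem fun hq hq' h hbase ↦
      h (Or.inl ⟨(hpB _ hq).1, (hpB _ hq').2.1, hbase⟩))

theorem isBase_symmDiff_of_minimal (hB : M.IsBase B) (hB' : M.IsBase B')
    (hdisj : Disjoint B B') {t : α} {r : List α} (hc : IsCycle (ExchEdge M B B') (t :: r))
    (ht : t ∈ B)
    (hmin : ¬∃ l', IsCycle (ExchEdge M B B') l' ∧ t ∈ l' ∧ {x | x ∈ l'} ⊂ {x | x ∈ t :: r}) :
    M.IsBase (symmDiff B {x | x ∈ t :: r}) ∧ M.IsBase (symmDiff B' {x | x ∈ t :: r}) := by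
  refine ⟨isBase_symmDiff_of_noShortcut hB hdisj hc ht
    (hc.noShortcut_of_minimal hmin (.inl rfl)), ?_⟩
  obtain ⟨b, r, rfl⟩ : ∃ b r', r = b :: r' := List.exists_cons_of_ne_nil fun hr ↦ by
    subst hr
    exact hdisj.notMem_of_mem_left ht
      ((hc.2.2.2 (List.cons_ne_nil t [])).isBase_of_left_mem hdisj ht).1
  have hb : b ∈ B' := ((List.isChain_cons_cons.1 hc.2.2.1).1.isBase_of_left_mem hdisj ht).1
  have hu : IsCycle (ExchEdge M B' B) (b :: (r ++ [t])) := by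
    simpa [exchEdge_comm_s2] using (show IsCycle _ ([t] ++ b :: r) from hc).append_comm
  have hset : {x | x ∈ b :: (r ++ [t])} = {x | x ∈ t :: b :: r} := by
    ext x
    simp only [mem_ofPred_eq, List.mem_cons, List.mem_append]
    tauto
  rw [← hset] at hmin ⊢
  rw [← exchEdge_comm_s2] at hmin
  have hlast : (b :: (r ++ [t])).getLast? = some t := by
    rw [← List.cons_append, List.getLast?_append_cons]
    rfl
  exact isBase_symmDiff_of_noShortcut hB' hdisj.symm hu hb
    (hu.noShortcut_of_minimal hmin (.inr hlast))

theorem exchangeableSet_of_minimal (hB : M.IsBase B) (hB' : M.IsBase B')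
    (hdisj : Disjoint B B') {t : α} {l : List α} (hc : IsCycle (ExchEdge M B B') l) (ht : t ∈ l)
    (hmin : ¬∃ l', IsCycle (ExchEdge M B B') l' ∧ t ∈ l' ∧ {x | x ∈ l'} ⊂ {x | x ∈ l}) :
    ExchangeableSet M B B' {x | x ∈ l} := by
  obtain ⟨r, hr, hset⟩ := hc.exists_cons ht
  rw [← hset] at hmin ⊢
  refine ⟨hr.subset_union, ?_⟩
  rcases hr.subset_union (List.mem_cons_self (a := t) (l := r)) with ht1 | ht2
  · exact isBase_symmDiff_of_minimal hB hB' hdisj hr ht1 hmin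
  · rw [exchEdge_comm_s2] at hr hmin
    exact (isBase_symmDiff_of_minimal hB' hB hdisj.symm hr ht2 hmin).symm

end ExchangeGraph

/-- If `C` is a cycle in the exchange graph `D(B1,B2)` and `t ∈ V(C)`, then there is an
exchangeable set `U ⊆ V(C)` with `t ∈ U`; moreover if no cycle `C'` satisfies
`t ∈ V(C') ⊊ V(C)`, then `V(C)` itself is exchangeable. -/
theorem cycle_implies_exchangeable (M : Matroid α) (B1 B2 : Set α)
    (hB1 : M.IsBase B1) (hB2 : M.IsBase B2) (hdisj : Disjoint B1 B2)
    (l : List α) (hcyc : IsCycle (ExchEdge M B1 B2) l) (t : α) (ht : t ∈ l) :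
    (∃ U : Set α, U ⊆ {x | x ∈ l} ∧ t ∈ U ∧ ExchangeableSet M B1 B2 U) ∧
    ((¬ ∃ l' : List α, IsCycle (ExchEdge M B1 B2) l' ∧ t ∈ l' ∧
        {x | x ∈ l'} ⊂ {x | x ∈ l}) →
      ExchangeableSet M B1 B2 {x | x ∈ l}) := by
  refine ⟨?_, exchangeableSet_of_minimal hB1 hB2 hdisj hcyc ht⟩
  obtain ⟨l', ⟨hc', ht', hsub⟩, hmin⟩ :=
    (measure fun l' : List α ↦ {x | x ∈ l'}.ncard).wf.has_min
      {l' | IsCycle (ExchEdge M B1 B2) l' ∧ t ∈ l' ∧ {x | x ∈ l'} ⊆ {x | x ∈ l}}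
      ⟨l, hcyc, ht, subset_rfl⟩
  refine ⟨_, hsub, ht', exchangeableSet_of_minimal hB1 hB2 hdisj hc' ht' ?_⟩
  rintro ⟨l'', hc'', ht'', hss⟩
  exact hmin l'' ⟨hc'', ht'', hss.subset.trans hsub⟩ (ncard_lt_ncard hss (List.finite_toSet l'))
end

section
/- Let B1, B2 be two disjoint bases of a matroid, let S ⊆ E, and suppose the exchange graph D(B1,B2) contains no directed cycle C with |V(C) \ S| = 1 and V(C) \ S ⊆ B1. Let K ⊆ S be a strongly connected component of the exchange graph restricted to S. Then for every x ∈ K ∩ B2 there exists a circuit C_x ⊆ B1 ∪ B2 such that B2 ∩ K ∩ C_x = {x} and B1 ∩ C_x ⊆ K. -/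
variable {α : Type*}

/-- A circuit of a matroid: a minimally dependent subset of the ground set. -/
def Matroid.IsCircuit' (M : Matroid α) (C : Set α) : Prop :=
  C ⊆ M.E ∧ ¬ M.Indep C ∧ ∀ D ⊂ C, M.Indep D

/-- `K` is a strongly connected component of the digraph with edge relation `R`:
`K` is nonempty, any two of its vertices are mutually reachable, and it is maximal
with this property. -/
def IsSCC (R : α → α → Prop) (K : Set α) : Prop :=
  K.Nonempty ∧ (∀ x ∈ K, ∀ y ∈ K, Relation.ReflTransGen R x y) ∧
  (∀ x ∈ K, ∀ z, Relation.ReflTransGen R x z → Relation.ReflTransGen R z x → z ∈ K)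

/-!
The witness for `x` is the circuit that `x` closes with `A = (B1 ∩ K) ∪ (B2 \ K)`; everything
rests on `x ∈ cl A`. Otherwise the fundamental circuit of `x` in `B1` contains some `y ∉ cl A`,
giving an edge `y → x` with `y ∈ B1 \ K`, and the fundamental circuit of `y` in `B2` contains some
`x₁ ∉ cl A`, necessarily in `K`, giving an edge `x₁ → y`. Maximality of the component forces
`y ∉ S`, and then a walk from `x` to `x₁` inside `S` closes, through `y`, a cycle whose only vertex
outside `S` lies in `B1`.
-/

open Set

namespace Matroid

lemma IsCircuit.isCircuit' {M : Matroid α} {C : Set α} (hC : M.IsCircuit C) :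
    M.IsCircuit' C :=
  let ⟨hdep, hmin⟩ := isCircuit_iff_forall_ssubset.1 hC
  ⟨hdep.subset_ground, hdep.not_indep, fun _ hD ↦ hmin hD⟩

lemma IsCircuit.exists_mem_ne_notMem_closure {M : Matroid α} {C X : Set α} {e : α}
    (hC : M.IsCircuit C) (heC : e ∈ C) (heX : e ∉ M.closure X) :
    ∃ y ∈ C, y ≠ e ∧ y ∉ M.closure X := by
  by_contra! h
  have hCX : C \ {e} ⊆ M.closure X := fun y ⟨hyC, hye⟩ ↦ h y hyC hye
  exact heX (M.closure_subset_closure_of_subset_closure hCX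
    (hC.mem_closure_sdiff_singleton_of_mem heC))

lemma IsBase.exists_exchange_notMem_closure {M : Matroid α} {B X : Set α} {e : α}
    (hB : M.IsBase B) (heE : e ∈ M.E) (heB : e ∉ B) (heX : e ∉ M.closure X) :
    ∃ y ∈ B, y ∉ M.closure X ∧ M.IsBase (insert e (B \ {y})) := by
  have hecl : e ∈ M.closure B := by rwa [hB.closure_eq]
  obtain ⟨y, hyC, hye, hyX⟩ := (hB.indep.fundCircuit_isCircuit hecl heB)
    |>.exists_mem_ne_notMem_closure (M.mem_fundCircuit e B) heX
  have hyB : y ∈ B := (M.fundCircuit_subset_insert e B hyC).resolve_left hye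
  have hind := (hB.indep.mem_fundCircuit_iff hecl heB).1 hyC
  refine ⟨y, hyB, hyX, ?_⟩
  rw [insert_sdiff_singleton_comm hye.symm]
  exact hB.exchange_isBase_of_indep' hyB heB hind

end Matroid

lemma List.exists_nodup_isChain_cons_of_relationReflTransGen {r : α → α → Prop} {a b : α}
    (h : Relation.ReflTransGen r a b) :
    ∃ l, IsChain r (a :: l) ∧ (a :: l).Nodup ∧ getLast (a :: l) (cons_ne_nil _ _) = b := by
  induction h using Relation.ReflTransGen.head_induction_on with
  | refl => exact ⟨[], .singleton _, nodup_singleton _, rfl⟩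
  | @head a c hac _ ih =>
    obtain ⟨l, hchain, hnodup, hlast⟩ := ih
    by_cases ha : a ∈ c :: l
    · -- shortcut the walk at the earlier visit of `a`
      obtain ⟨s, t, hst⟩ := append_of_mem ha
      rw [hst] at hchain hnodup
      exact ⟨t, hchain.suffix (suffix_append s _), hnodup.sublist (sublist_append_right s _),
        by simpa [hst] using hlast⟩
    · exact ⟨c :: l, hchain.cons_cons hac, nodup_cons.2 ⟨ha, hnodup⟩, by rwa [getLast_cons_cons]⟩

lemma exists_isCycle_sdiff_eq_singleton {R : α → α → Prop} {S : Set α} {a b y : α}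
    (hab : Relation.ReflTransGen (fun u v ↦ R u v ∧ u ∈ S ∧ v ∈ S) a b) (ha : a ∈ S)
    (hy : y ∉ S) (hya : R y a) (hby : R b y) :
    ∃ l, IsCycle R l ∧ {z | z ∈ l} \ S = {y} := by
  obtain ⟨l, hchain, hnodup, hlast⟩ := List.exists_nodup_isChain_cons_of_relationReflTransGen hab
  have hlS : ∀ z ∈ a :: l, z ∈ S :=
    hchain.induction (· ∈ S) _ (fun _ _ h _ ↦ h.2.2) (fun _ ↦ ha)
  refine ⟨y :: a :: l, ⟨List.cons_ne_nil _ _, ?_, ?_, fun _ ↦ ?_⟩, ?_⟩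
  · exact List.nodup_cons.2 ⟨fun h ↦ hy (hlS y h), hnodup⟩
  · exact (hchain.imp fun _ _ h ↦ h.1).cons_cons hya
  · rwa [List.getLast_cons (List.cons_ne_nil _ _), hlast]
  · ext z
    simp only [mem_sdiff, mem_ofPred_eq, mem_singleton_iff]
    constructor
    · rintro ⟨hz, hzS⟩
      exact (List.mem_cons.1 hz).resolve_right fun hz ↦ hzS (hlS z hz)
    · rintro rfl
      exact ⟨List.mem_cons_self, hy⟩

lemma mem_closure_inter_union_sdiff_of_isSCC {M : Matroid α} {B1 B2 S K : Set α} {x : α}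
    (hB1 : M.IsBase B1) (hB2 : M.IsBase B2) (hdisj : Disjoint B1 B2)
    (hnocyc : ¬ ∃ l : List α, IsCycle (ExchEdge M B1 B2) l ∧
      ({x | x ∈ l} \ S).encard = 1 ∧ {x | x ∈ l} \ S ⊆ B1)
    (hKS : K ⊆ S) (hK : IsSCC (fun x y => ExchEdge M B1 B2 x y ∧ x ∈ S ∧ y ∈ S) K)
    (hxK : x ∈ K) (hxB2 : x ∈ B2) :
    x ∈ M.closure ((B1 ∩ K) ∪ (B2 \ K)) := by
  obtain ⟨-, hKconn, hKmax⟩ := hK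
  set A := (B1 ∩ K) ∪ (B2 \ K)
  have hAE : A ⊆ M.E :=
    union_subset (inter_subset_left.trans hB1.subset_ground) (sdiff_subset.trans hB2.subset_ground)
  by_contra hxA
  obtain ⟨y, hyB1, hyA, hxB1y⟩ := hB1.exists_exchange_notMem_closure (hB2.subset_ground hxB2)
    (hdisj.notMem_of_mem_right hxB2) hxA
  obtain ⟨x₁, hx₁B2, hx₁A, hyB2x₁⟩ := hB2.exists_exchange_notMem_closure (hB1.subset_ground hyB1)
    (hdisj.notMem_of_mem_left hyB1) hyA
  have hyK : y ∉ K := fun hyK ↦ hyA (M.subset_closure A hAE (.inl ⟨hyB1, hyK⟩))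
  have hx₁K : x₁ ∈ K := by_contra fun hx₁K ↦ hx₁A (M.subset_closure A hAE (.inr ⟨hx₁B2, hx₁K⟩))
  have hyx : ExchEdge M B1 B2 y x := .inl ⟨hyB1, hxB2, hxB1y⟩
  have hx₁y : ExchEdge M B1 B2 x₁ y := .inr ⟨hx₁B2, hyB1, hyB2x₁⟩
  have hyS : y ∉ S := fun hyS ↦ hyK <| hKmax x₁ hx₁K y (.single ⟨hx₁y, hKS hx₁K, hyS⟩)
    ((Relation.ReflTransGen.single ⟨hyx, hyS, hKS hxK⟩).trans (hKconn x hxK x₁ hx₁K))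
  obtain ⟨l, hl, hlS⟩ :=
    exists_isCycle_sdiff_eq_singleton (hKconn x hxK x₁ hx₁K) (hKS hxK) hyS hyx hx₁y
  exact hnocyc ⟨l, hl, by rw [hlS, encard_singleton], by rwa [hlS, singleton_subset_iff]⟩

theorem scc_witness_circuits_general (M : Matroid α) (B1 B2 S : Set α)
    (hB1 : M.IsBase B1) (hB2 : M.IsBase B2) (hdisj : Disjoint B1 B2)
    (hnocyc : ¬ ∃ l : List α, IsCycle (ExchEdge M B1 B2) l ∧
      ({x | x ∈ l} \ S).encard = 1 ∧ {x | x ∈ l} \ S ⊆ B1)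
    (K : Set α) (hKS : K ⊆ S)
    (hK : IsSCC (fun x y => ExchEdge M B1 B2 x y ∧ x ∈ S ∧ y ∈ S) K) :
    ∀ x ∈ K ∩ B2, ∃ C : Set α, C ⊆ B1 ∪ B2 ∧ M.IsCircuit' C ∧
      B2 ∩ K ∩ C = {x} ∧ B1 ∩ C ⊆ K := by
  rintro x ⟨hxK, hxB2⟩
  have hxB1 : x ∉ B1 := hdisj.notMem_of_mem_right hxB2
  obtain ⟨C, hCA, hC, hxC⟩ := M.exists_isCircuit_of_mem_closure
    (mem_closure_inter_union_sdiff_of_isSCC hB1 hB2 hdisj hnocyc hKS hK hxK hxB2)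
    (by rintro (⟨hxB1', -⟩ | ⟨-, hxK'⟩) <;> contradiction)
  refine ⟨C, ?_, hC.isCircuit', ?_, ?_⟩
  · exact hCA.trans (insert_subset (.inr hxB2) (union_subset_union inter_subset_left sdiff_subset))
  · refine subset_antisymm (fun z ⟨⟨hzB2, hzK⟩, hzC⟩ ↦ ?_)
      (singleton_subset_iff.2 ⟨⟨hxB2, hxK⟩, hxC⟩)
    rcases hCA hzC with rfl | ⟨hzB1, -⟩ | ⟨-, hzK'⟩
    · rfl
    · exact absurd hzB2 (hdisj.notMem_of_mem_left hzB1)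
    · contradiction
  · rintro z ⟨hzB1, hzC⟩
    rcases hCA hzC with rfl | ⟨-, hzK⟩ | ⟨hzB2, -⟩
    · contradiction
    · exact hzK
    · exact absurd hzB2 (hdisj.notMem_of_mem_left hzB1)

/-- Suppose the exchange graph `D(B1,B2)` has no directed cycle `C` with
`|V(C) \ S| = 1` and `V(C) \ S ⊆ B1`, and let `K ⊆ S` be a strongly connected component
of the exchange graph restricted to `S`. Then every `x ∈ K ∩ B2` has a witness circuit
`C_x ⊆ B1 ∪ B2` with `B2 ∩ K ∩ C_x = {x}` and `B1 ∩ C_x ⊆ K`. -/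
theorem scc_witness_circuits (M : Matroid α) (B1 B2 S : Set α)
    (hB1 : M.IsBase B1) (hB2 : M.IsBase B2) (hdisj : Disjoint B1 B2) (hS : S ⊆ M.E)
    (hnocyc : ¬ ∃ l : List α, IsCycle (ExchEdge M B1 B2) l ∧
      ({x | x ∈ l} \ S).encard = 1 ∧ {x | x ∈ l} \ S ⊆ B1)
    (K : Set α) (hKS : K ⊆ S)
    (hK : IsSCC (fun x y => ExchEdge M B1 B2 x y ∧ x ∈ S ∧ y ∈ S) K) :
    ∀ x ∈ K ∩ B2, ∃ C : Set α, C ⊆ B1 ∪ B2 ∧ M.IsCircuit' C ∧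
      B2 ∩ K ∩ C = {x} ∧ B1 ∩ C ⊆ K :=
  scc_witness_circuits_general M B1 B2 S hB1 hB2 hdisj hnocyc K hKS hK
end

section
/- In the graphic matroid of the complete graph K4 on vertices {1,2,3,4}, with S1 = {(1,2),(3,4)} and S2 = {(1,3),(2,4)}, the edge set can be partitioned into two disjoint bases (spanning trees), but there is no partition of the edge set into two disjoint spanning trees B1, B2 with |B1 ∩ S1| = 1 and |B1 ∩ S2| = 1. -/
/-- The edge set of the complete graph `K4` on four vertices. -/
def K4Edges : Set (Sym2 (Fin 4)) := {e | ¬ e.IsDiag}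

/-- A basis (spanning tree) of the graphic matroid of `K4`: a set of three edges of `K4`
forming no cycle (i.e. the graph they span is acyclic). -/
def IsK4TreeBasis (T : Set (Sym2 (Fin 4))) : Prop :=
  T ⊆ K4Edges ∧ T.ncard = 3 ∧ (SimpleGraph.fromEdgeSet T).IsAcyclic

instance singletonMemDec {V : Type*} [DecidableEq V] (e : Sym2 V) :
    DecidablePred (· ∈ ({e} : Set (Sym2 V))) := fun x =>
  decidable_of_iff (x = e) Set.mem_singleton_iff.symm

instance fromEdgeSetAdjDec {V : Type*} [DecidableEq V] (s : Set (Sym2 V))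
    [DecidablePred (· ∈ s)] : DecidableRel (SimpleGraph.fromEdgeSet s).Adj := fun a b =>
  decidable_of_iff (s(a,b) ∈ s ∧ a ≠ b) (SimpleGraph.fromEdgeSet_adj s).symm

/-- First spanning tree: the path 0-1-2-3. -/
def F1 : Finset (Sym2 (Fin 4)) := {s(0,1), s(1,2), s(2,3)}

/-- Second spanning tree: the path 2-0-3-1. -/
def F2 : Finset (Sym2 (Fin 4)) := {s(0,2), s(0,3), s(1,3)}

lemma acyclic_F1 : (SimpleGraph.fromEdgeSet (↑F1 : Set (Sym2 (Fin 4)))).IsAcyclic := by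
  rw [SimpleGraph.isAcyclic_iff_forall_adj_isBridge]
  unfold SimpleGraph.IsBridge
  simp only [Sym2.lift_mk, SimpleGraph.mem_edgeSet]
  decide

lemma acyclic_F2 : (SimpleGraph.fromEdgeSet (↑F2 : Set (Sym2 (Fin 4)))).IsAcyclic := by
  rw [SimpleGraph.isAcyclic_iff_forall_adj_isBridge]
  unfold SimpleGraph.IsBridge
  simp only [Sym2.lift_mk, SimpleGraph.mem_edgeSet]
  decide

lemma no_triangle {T : Set (Sym2 (Fin 4))} (hA : (SimpleGraph.fromEdgeSet T).IsAcyclic)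
    {a b c : Fin 4} (hab : s(a,b) ∈ T) (hbc : s(b,c) ∈ T) (hca : s(c,a) ∈ T)
    (h1 : a ≠ b) (h2 : b ≠ c) (h3 : a ≠ c) : False := by
  set G := SimpleGraph.fromEdgeSet T with hG
  have Hab : G.Adj a b := by rw [hG, SimpleGraph.fromEdgeSet_adj]; exact ⟨hab, h1⟩
  have Hbc : G.Adj b c := by rw [hG, SimpleGraph.fromEdgeSet_adj]; exact ⟨hbc, h2⟩
  have Hca : G.Adj c a := by rw [hG, SimpleGraph.fromEdgeSet_adj]; exact ⟨hca, h3.symm⟩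
  have hc : (SimpleGraph.Walk.cons Hab (SimpleGraph.Walk.cons Hbc
      (SimpleGraph.Walk.cons Hca SimpleGraph.Walk.nil))).IsCycle := by
    simp [SimpleGraph.Walk.isCycle_def, SimpleGraph.Walk.isTrail_def, Sym2.eq, Sym2.rel_iff',
      h1, h2, h3, h1.symm, h2.symm, h3.symm, and_assoc]
  exact hA _ hc

lemma mem_pair_of_ncard_one {α : Type*} {A : Set α} {x y : α} (hxy : x ≠ y)
    (h : (A ∩ {x, y}).ncard = 1) : (x ∈ A ∧ y ∉ A) ∨ (y ∈ A ∧ x ∉ A) := by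
  by_cases hx : x ∈ A <;> by_cases hy : y ∈ A
  · exfalso
    have heq : A ∩ {x, y} = {x, y} := by
      apply Set.inter_eq_right.mpr
      intro e he
      rcases he with rfl | he
      · exact hx
      · rcases he with rfl; exact hy
    rw [heq, Set.ncard_pair hxy] at h
    omega
  · exact Or.inl ⟨hx, hy⟩
  · exact Or.inr ⟨hy, hx⟩
  · exfalso
    have heq : A ∩ {x, y} = ∅ := by
      ext e
      simp only [Set.mem_inter_iff, Set.mem_insert_iff, Set.mem_singleton_iff,
        Set.mem_empty_iff_false, iff_false, not_and]
      rintro he (rfl | rfl) <;> [exact hx he; exact hy he]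
    rw [heq, Set.ncard_empty] at h
    omega

/-- In the graphic matroid of `K4`, with `S1 = {(1,2),(3,4)}` and `S2 = {(1,3),(2,4)}`
(here on vertices `0,1,2,3`: `S1 = {(0,1),(2,3)}`, `S2 = {(0,2),(1,3)}`), the edge set
can be partitioned into two disjoint spanning trees, but no such partition `B1, B2`
satisfies `|B1 ∩ S1| = 1` and `|B1 ∩ S2| = 1`. -/
theorem k4_not_two_equitable :
    (∃ B1 B2 : Set (Sym2 (Fin 4)), IsK4TreeBasis B1 ∧ IsK4TreeBasis B2 ∧
      Disjoint B1 B2 ∧ B1 ∪ B2 = K4Edges) ∧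
    ¬ ∃ B1 B2 : Set (Sym2 (Fin 4)), IsK4TreeBasis B1 ∧ IsK4TreeBasis B2 ∧
      Disjoint B1 B2 ∧ B1 ∪ B2 = K4Edges ∧
      (B1 ∩ {s(0, 1), s(2, 3)}).ncard = 1 ∧ (B1 ∩ {s(0, 2), s(1, 3)}).ncard = 1 := by
  constructor
  · refine ⟨↑F1, ↑F2, ⟨?_, ?_, acyclic_F1⟩, ⟨?_, ?_, acyclic_F2⟩, ?_, ?_⟩
    · intro e he
      rw [Finset.mem_coe] at he
      fin_cases he <;> simp [K4Edges]
    · rw [Set.ncard_coe_finset]; decide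
    · intro e he
      rw [Finset.mem_coe] at he
      fin_cases he <;> simp [K4Edges]
    · rw [Set.ncard_coe_finset]; decide
    · rw [Finset.disjoint_coe]; decide
    · ext e
      induction e using Sym2.ind with
      | _ x y =>
        simp only [Set.mem_union, Finset.mem_coe, K4Edges, Set.mem_setOf_eq]
        fin_cases x <;> fin_cases y <;> decide
  · rintro ⟨B1, B2, ⟨_, _, ha1⟩, ⟨_, _, ha2⟩, hd, hu, hp1, hp2⟩
    have mem2 : ∀ e : Sym2 (Fin 4), ¬ e.IsDiag → e ∉ B1 → e ∈ B2 := by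
      intro e he h1
      have : e ∈ B1 ∪ B2 := by rw [hu]; exact he
      exact this.resolve_left h1
    have hdl := Set.disjoint_left.mp hd
    have hA := mem_pair_of_ncard_one (by decide : s(0,1) ≠ s((2:Fin 4),3)) hp1
    have hB := mem_pair_of_ncard_one (by decide : s(0,2) ≠ s((1:Fin 4),3)) hp2
    rcases hA with ⟨h01, h23⟩ | ⟨h23, h01⟩ <;> rcases hB with ⟨h02, h13⟩ | ⟨h13, h02⟩
    · -- 01,02 ∈ B1; 23,13 ∈ B2
      by_cases h12 : s(1,2) ∈ B1
      · exact no_triangle ha1 h01 h12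
          (show s(2,0) ∈ B1 by rw [Sym2.eq_swap]; exact h02) (by decide) (by decide) (by decide)
      · have h12' : s((1:Fin 4),2) ∈ B2 := mem2 _ (by decide) h12
        have h23' : s((2:Fin 4),3) ∈ B2 := mem2 _ (by decide) h23
        have h13' : s((1:Fin 4),3) ∈ B2 := mem2 _ (by decide) h13
        exact no_triangle ha2 h12' h23'
          (show s(3,1) ∈ B2 by rw [Sym2.eq_swap]; exact h13') (by decide) (by decide) (by decide)
    · -- 01,13 ∈ B1; 23,02 ∈ B2
      by_cases h03 : s((0:Fin 4),3) ∈ B1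
      · exact no_triangle ha1 h01 h13
          (show s(3,0) ∈ B1 by rw [Sym2.eq_swap]; exact h03) (by decide) (by decide) (by decide)
      · have h03' : s((0:Fin 4),3) ∈ B2 := mem2 _ (by decide) h03
        have h23' : s((2:Fin 4),3) ∈ B2 := mem2 _ (by decide) h23
        have h02' : s((0:Fin 4),2) ∈ B2 := mem2 _ (by decide) h02
        exact no_triangle ha2 h02' h23'
          (show s(3,0) ∈ B2 by rw [Sym2.eq_swap]; exact h03') (by decide) (by decide) (by decide)
    · -- 23,02 ∈ B1; 01,13 ∈ B2
      by_cases h03 : s((0:Fin 4),3) ∈ B1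
      · exact no_triangle ha1 h02 h23
          (show s(3,0) ∈ B1 by rw [Sym2.eq_swap]; exact h03) (by decide) (by decide) (by decide)
      · have h03' : s((0:Fin 4),3) ∈ B2 := mem2 _ (by decide) h03
        have h01' : s((0:Fin 4),1) ∈ B2 := mem2 _ (by decide) h01
        have h13' : s((1:Fin 4),3) ∈ B2 := mem2 _ (by decide) h13
        exact no_triangle ha2 h01' h13'
          (show s(3,0) ∈ B2 by rw [Sym2.eq_swap]; exact h03') (by decide) (by decide) (by decide)
    · -- 23,13 ∈ B1; 01,02 ∈ B2
      by_cases h12 : s((1:Fin 4),2) ∈ B1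
      · exact no_triangle ha1 h12 h23
          (show s(3,1) ∈ B1 by rw [Sym2.eq_swap]; exact h13) (by decide) (by decide) (by decide)
      · have h12' : s((1:Fin 4),2) ∈ B2 := mem2 _ (by decide) h12
        have h01' : s((0:Fin 4),1) ∈ B2 := mem2 _ (by decide) h01
        have h02' : s((0:Fin 4),2) ∈ B2 := mem2 _ (by decide) h02
        exact no_triangle ha2 h01' h12'
          (show s(2,0) ∈ B2 by rw [Sym2.eq_swap]; exact h02') (by decide) (by decide) (by decide)
end

section
/- Assume Gabow's conjecture: for any two bases B1 = {b_1,...,b_r}, B2 = {b'_1,...,b'_r} of a matroid, there exist permutations σ, σ' such that in the sequence (b_{σ(1)},...,b_{σ(r)}, b'_{σ'(1)},...,b'_{σ'(r)}) every r cyclically consecutive elements form a basis. Then for a matroid-constrained fair division instance with identical additive nonnegative valuations v where E partitions into n bases, any feasible allocation A maximizing the sorted vector (v(A_{σ(1)}),...,v(A_{σ(n)})) (sorted increasingly) lexicographically is EF1. -/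
/-!
If `A` is not EF1 there are bundles `A i`, `A j` with `v (A i) + v g < v (A j)` for every
`g ∈ A j`. Gabow's conjecture orders them as `l₁`, `l₂` so that every cyclic window of
`l₁ ++ l₂` is a basis; with `r` the rank, the windows starting at `k` and at `k + r`
partition `A i ∪ A j`. As `k` runs from `0` to `r`, the value of the first window moves from
`v (A i)` to `v (A j)` by exchanging `l₁[k]` for `l₂[k]`, a step that raises it by at most
`v l₂[k]`. At the first `k` where it exceeds `v (A i)` it is therefore still below `v (A j)`,
so both windows are worth more than `v (A i)`, and replacing `A i`, `A j` by them is a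
lexicographic improvement.
-/

variable {α : Type*}

noncomputable def setVal (v : α → ℝ) (A : Set α) : ℝ := ∑ᶠ g ∈ A, v g

def IsBasePartition (M : Matroid α) (n : ℕ) (A : Fin n → Set α) : Prop :=
  (∀ i, M.IsBase (A i)) ∧ Pairwise (Function.onFun Disjoint A) ∧ (⋃ i, A i) = M.E

noncomputable def mmsOn (M : Matroid α) (E' : Set α) (m : ℕ) (v : α → ℝ) : ℝ :=
  sSup {x | ∃ A : Fin m → Set α, (∀ i, M.IsBase (A i)) ∧
    Pairwise (Function.onFun Disjoint A) ∧ (⋃ i, A i) = E' ∧ x = ⨅ j, setVal v (A j)}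

noncomputable def mms (M : Matroid α) (n : ℕ) (v : α → ℝ) : ℝ := mmsOn M M.E n v

def EF1 {n : ℕ} (v : Fin n → α → ℝ) (A : Fin n → Set α) : Prop :=
  ∀ i j, (A j).Nonempty → ∃ g ∈ A j, setVal (v i) (A i) ≥ setVal (v i) (A j \ {g})

/-- Gabow's conjecture (for matroids on `α`): for any two bases `B1, B2` there are
orderings `l1` of `B1` and `l2` of `B2` such that in the concatenated sequence every
`r` cyclically consecutive elements form a basis. -/
def GabowConjecture (α : Type*) : Prop :=
  ∀ (M' : Matroid α) (B1 B2 : Set α), M'.IsBase B1 → M'.IsBase B2 →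
    ∃ l1 l2 : List α, l1.Nodup ∧ l2.Nodup ∧ {x | x ∈ l1} = B1 ∧ {x | x ∈ l2} = B2 ∧
      l1.length = l2.length ∧
      ∀ i : ℕ, M'.IsBase
        {x | ∃ j < l1.length, (l1 ++ l2)[(i + j) % (l1 ++ l2).length]? = some x}

/-- The list of bundle values of an allocation, sorted in nondecreasing order. -/
noncomputable def sortedVals {n : ℕ} (v : α → ℝ) (A : Fin n → Set α) : List ℝ :=
  (List.ofFn fun j => setVal v (A j)).mergeSort (· ≤ ·)

open Function

namespace List

variable {β : Type*}

theorem ofFn_append_singleton_perm_update {n : ℕ} (f : Fin n → β) (i : Fin n) (x : β) :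
    (ofFn f ++ [x]).Perm (ofFn (update f i x) ++ [f i]) := by
  have hrest : ((finRange n).erase i).map (update f i x) = ((finRange n).erase i).map f :=
    map_congr_left fun t ht => update_of_ne ((nodup_finRange n).mem_erase_iff.1 ht).1 x f
  have hperm (g : Fin n → β) : (ofFn g).Perm (g i :: ((finRange n).erase i).map g) := by
    rw [ofFn_eq_map]
    exact (perm_cons_erase (mem_finRange i)).map g
  refine ((hperm f).append_right _).trans (Perm.trans ?_ ((hperm _).append_right _).symm)
  rw [update_self, hrest]
  exact (perm_append_singleton _ _).cons _ |>.trans (.swap _ _ _) |>.trans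
    ((perm_append_singleton _ _).symm.cons _)

theorem ofFn_append_pair_perm_update_update {n : ℕ} (f : Fin n → β) {i j : Fin n} (hij : i ≠ j)
    (x y : β) : (ofFn f ++ [x, y]).Perm (ofFn (update (update f i x) j y) ++ [f i, f j]) := by
  have h₁ := (ofFn_append_singleton_perm_update f i x).append_right [y]
  have h₂ := (ofFn_append_singleton_perm_update (update f i x) j y).append_right [f i]
  rw [update_of_ne hij.symm] at h₂
  simp only [append_assoc, singleton_append] at h₁ h₂
  exact h₁.trans (((Perm.swap y (f i) []).append_left _).trans h₂ |>.trans
    ((Perm.swap (f i) (f j) []).append_left _))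

theorem take_rotate_append {l₁ l₂ : List β} {k : ℕ} (hk₁ : k ≤ l₁.length) (hk₂ : k ≤ l₂.length) :
    ((l₁ ++ l₂).rotate k).take l₁.length = l₁.drop k ++ l₂.take k := by
  rw [rotate_eq_drop_append_take (by simp; omega), drop_append_of_le_length hk₁,
    take_append_of_le_length hk₁]
  simp [take_append, Nat.sub_sub_self hk₁, Nat.sub_eq_zero_of_le hk₂]

theorem setOf_getElem?_add_mod_eq_take_rotate (L : List β) (i : ℕ) {r : ℕ} (hr : r ≤ L.length) :
    {x | ∃ j < r, L[(i + j) % L.length]? = some x} = {x | x ∈ (L.rotate i).take r} := by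
  ext x
  simp only [Set.mem_ofPred_eq, mem_iff_getElem?, getElem?_take]
  constructor
  · rintro ⟨j, hj, h⟩
    exact ⟨j, by rwa [if_pos hj, getElem?_rotate (by omega), add_comm]⟩
  · rintro ⟨j, h⟩
    split_ifs at h with hj
    · exact ⟨j, hj, by rwa [getElem?_rotate (by omega), add_comm] at h⟩

theorem perm_drop_append_take_append_drop_append_take (k : ℕ) {l₁ l₂ : List β} :
    (l₁.drop k ++ l₂.take k ++ (l₂.drop k ++ l₁.take k)).Perm (l₁ ++ l₂) := by
  classical
  rw [perm_iff_count]
  intro z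
  conv_rhs => rw [← l₁.take_append_drop k, ← l₂.take_append_drop k]
  simp only [count_append]
  omega

variable [LinearOrder β]

theorem lex_lt_of_count_lt : ∀ {L L' : List β}, L.Pairwise (· ≤ ·) → L'.Pairwise (· ≤ ·) →
    L.length = L'.length → ∀ {a : β}, L'.count a < L.count a →
    (∀ z < a, L.count z = L'.count z) → Lex (· < ·) L L'
  | [], _, _, _, _, _, hc, _ => by simp at hc
  | _ :: _, [], _, _, hlen, _, _, _ => by simp at hlen
  | x :: t, y :: t', hL, hL', hlen, a, hc, hz => by
    have hbelow : ∀ z < x, (x :: t).count z = 0 := fun z hzx =>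
      count_eq_zero.2 fun hz => (mem_cons.1 hz).elim (fun h => hzx.ne h)
        fun h => (pairwise_cons.1 hL).1 z h |>.not_gt hzx
    have hxa : x ≤ a := by
      by_contra! hax
      simp [hbelow a hax] at hc
    rcases lt_trichotomy x y with hxy | rfl | hyx
    · exact .rel hxy
    · refine .cons (lex_lt_of_count_lt (pairwise_cons.1 hL).2 (pairwise_cons.1 hL').2
        (by simpa using hlen) (a := a) ?_ fun z hza => ?_)
      · simp only [count_cons] at hc
        omega
      · have := hz z hza
        simp only [count_cons] at this
        omega
    · have := hz y (hyx.trans_le hxa)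
      rw [hbelow y hyx, eq_comm, count_eq_zero] at this
      exact absurd mem_cons_self this

theorem lex_lt_of_append_pair_perm {L L' : List β} {x y a b : β} (hL : L.Pairwise (· ≤ ·))
    (hL' : L'.Pairwise (· ≤ ·)) (hperm : (L ++ [x, y]).Perm (L' ++ [a, b])) (hab : a ≤ b)
    (hax : a < x) (hay : a < y) : Lex (· < ·) L L' := by
  refine lex_lt_of_count_lt hL hL' (by simpa using hperm.length_eq) (a := a) ?_ fun z hza => ?_
  · have := hperm.count_eq a
    simp [hax.ne', hay.ne'] at this
    omega
  · have := hperm.count_eq z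
    simp [hza.ne', (hza.trans hax).ne', (hza.trans hay).ne', (hza.trans_le hab).ne'] at this
    omega

end List

theorem exists_le_lt_succ_of_le_of_lt {γ : Type*} [LinearOrder γ] (F : ℕ → γ) {a : γ}
    (h₀ : F 0 ≤ a) : ∀ {r : ℕ}, a < F r → ∃ m < r, F m ≤ a ∧ a < F (m + 1)
  | 0, h => absurd h h₀.not_gt
  | r + 1, h => by
    by_cases hr : F r ≤ a
    · exact ⟨r, r.lt_succ_self, hr, h⟩
    · obtain ⟨m, hm, hle, hlt⟩ := exists_le_lt_succ_of_le_of_lt F h₀ (not_le.1 hr)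
      exact ⟨m, hm.trans r.lt_succ_self, hle, hlt⟩

theorem exists_sum_drop_append_take_mem_Ioo (v : α → ℝ) {l₁ l₂ : List α}
    (hlen : l₁.length = l₂.length) (hv : ∀ x ∈ l₁, 0 ≤ v x)
    (hlt : (l₁.map v).sum < (l₂.map v).sum)
    (hgap : ∀ y ∈ l₂, (l₁.map v).sum + v y < (l₂.map v).sum) :
    ∃ k ≤ l₁.length,
      ((l₁.drop k ++ l₂.take k).map v).sum ∈ Set.Ioo (l₁.map v).sum (l₂.map v).sum := by
  set F : ℕ → ℝ := fun k => ((l₁.drop k ++ l₂.take k).map v).sum with hF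
  have hstep (m : ℕ) (h₁ : m < l₁.length) (h₂ : m < l₂.length) :
      F (m + 1) + v l₁[m] = F m + v l₂[m] := by
    simp only [hF, List.drop_eq_getElem_cons h₁, List.take_add_one, List.getElem?_eq_getElem h₂,
      List.map_append, List.sum_append, List.map_cons, List.sum_cons, Option.toList_some,
      List.map_nil, List.sum_nil]
    ring
  obtain ⟨m, hm, hle, hgt⟩ := exists_le_lt_succ_of_le_of_lt F (a := (l₁.map v).sum)
    (by simp [hF]) (r := l₁.length)
    (by simp only [hF]; rwa [List.drop_length, hlen, List.take_length, List.nil_append])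
  have hm₂ : m < l₂.length := hlen ▸ hm
  refine ⟨m + 1, hm, hgt, ?_⟩
  linarith [hstep m hm hm₂, hv _ (List.getElem_mem hm), hgap _ (List.getElem_mem hm₂)]

theorem setVal_setOf_mem (v : α → ℝ) {l : List α} (hl : l.Nodup) :
    setVal v {x | x ∈ l} = (l.map v).sum := by
  classical
  rw [setVal, ← List.coe_toFinset, finsum_mem_coe_finset, List.sum_toFinset _ hl]

theorem setVal_eq_add_setVal_diff_singleton (v : α → ℝ) {S : Set α} (hS : S.Finite) {g : α}
    (hg : g ∈ S) : setVal v S = v g + setVal v (S \ {g}) := by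
  have hS' : insert g (S \ {g}) = S := by rw [Set.insert_sdiff_singleton, Set.insert_eq_of_mem hg]
  rw [setVal, setVal, ← finsum_mem_insert (a := g) (s := S \ {g}) v (fun h => h.2 rfl) hS.sdiff,
    hS']

theorem GabowConjecture.exists_isBase_drop_append_take (hG : GabowConjecture α)
    {M : Matroid α} {B₁ B₂ : Set α} (h₁ : M.IsBase B₁) (h₂ : M.IsBase B₂) :
    ∃ l₁ l₂ : List α, l₁.Nodup ∧ l₂.Nodup ∧ {x | x ∈ l₁} = B₁ ∧ {x | x ∈ l₂} = B₂ ∧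
      l₁.length = l₂.length ∧ ∀ k ≤ l₁.length,
        M.IsBase {x | x ∈ l₁.drop k ++ l₂.take k} ∧ M.IsBase {x | x ∈ l₂.drop k ++ l₁.take k} := by
  obtain ⟨l₁, l₂, hn₁, hn₂, hs₁, hs₂, hlen, hwin⟩ := hG M B₁ B₂ h₁ h₂
  refine ⟨l₁, l₂, hn₁, hn₂, hs₁, hs₂, hlen, fun k hk => ⟨?_, ?_⟩⟩
  · have := hwin k
    rwa [List.setOf_getElem?_add_mod_eq_take_rotate _ _ (by simp),
      List.take_rotate_append hk (hlen ▸ hk)] at this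
  · have := hwin (l₁.length + k)
    rwa [List.setOf_getElem?_add_mod_eq_take_rotate _ _ (by simp), ← List.rotate_rotate,
      List.rotate_append_length_eq, hlen, List.take_rotate_append (hlen ▸ hk) hk] at this

theorem IsBasePartition.update_update {M : Matroid α} {n : ℕ} {A : Fin n → Set α}
    (hA : IsBasePartition M n A) {i j : Fin n} (hij : i ≠ j) {W₁ W₂ : Set α}
    (h₁ : M.IsBase W₁) (h₂ : M.IsBase W₂) (hW : Disjoint W₁ W₂)
    (hunion : W₁ ∪ W₂ = A i ∪ A j) : IsBasePartition M n (update (update A i W₁) j W₂) := by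
  obtain ⟨hbase, hdisj, hcover⟩ := hA
  set A' := update (update A i W₁) j W₂
  have hbase' (t : Fin n) : M.IsBase (A' t) := by
    simp only [A', update_apply]
    split_ifs
    exacts [h₂, h₁, hbase t]
  have hout (t : Fin n) (hti : t ≠ i) (htj : t ≠ j) : Disjoint (A t) (A i ∪ A j) :=
    Set.disjoint_union_right.2 ⟨hdisj hti, hdisj htj⟩
  have hW₁ : W₁ ⊆ A i ∪ A j := hunion ▸ Set.subset_union_left
  have hW₂ : W₂ ⊆ A i ∪ A j := hunion ▸ Set.subset_union_right
  refine ⟨hbase', fun s t hst => ?_, ?_⟩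
  · simp only [onFun, A', update_apply]
    split_ifs <;> subst_vars
    all_goals first
      | exact absurd rfl hst
      | exact hW | exact hW.symm | exact hdisj hst
      | exact ((hout _ ‹_› ‹_›).mono_right ‹_›).symm
      | exact (hout _ ‹_› ‹_›).mono_right ‹_›
  · refine (Set.iUnion_subset fun t => (hbase' t).subset_ground).antisymm ?_
    have hpair : A i ∪ A j ⊆ ⋃ t, A' t := by
      rw [← hunion]
      refine Set.union_subset ?_ ?_
      · simpa [A', hij] using Set.subset_iUnion A' i
      · simpa [A'] using Set.subset_iUnion A' j
    rw [← hcover]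
    refine Set.iUnion_subset fun t => ?_
    by_cases hti : t = i
    · exact hti ▸ Set.subset_union_left.trans hpair
    by_cases htj : t = j
    · exact htj ▸ Set.subset_union_right.trans hpair
    simpa [A', hti, htj] using Set.subset_iUnion A' t

theorem IsBasePartition.exists_update_update_lt (hG : GabowConjecture α) {M : Matroid α}
    {n : ℕ} {A : Fin n → Set α} (hA : IsBasePartition M n A) {v : α → ℝ} {i j : Fin n}
    (hij : i ≠ j) (hv : ∀ g ∈ A i, 0 ≤ v g) (hlt : setVal v (A i) < setVal v (A j))
    (hgap : ∀ g ∈ A j, setVal v (A i) + v g < setVal v (A j)) :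
    ∃ W₁ W₂ : Set α, IsBasePartition M n (update (update A i W₁) j W₂) ∧
      setVal v (A i) < setVal v W₁ ∧ setVal v (A i) < setVal v W₂ := by
  obtain ⟨l₁, l₂, hn₁, hn₂, hs₁, hs₂, hlen, hbases⟩ :=
    hG.exists_isBase_drop_append_take (hA.1 i) (hA.1 j)
  have hmem₁ (x : α) : x ∈ A i ↔ x ∈ l₁ := by rw [← hs₁]; rfl
  have hmem₂ (x : α) : x ∈ A j ↔ x ∈ l₂ := by rw [← hs₂]; rfl
  rw [← hs₁, ← hs₂, setVal_setOf_mem v hn₁, setVal_setOf_mem v hn₂] at hlt hgap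
  obtain ⟨k, hk, hlo, hhi⟩ := exists_sum_drop_append_take_mem_Ioo v hlen
    (fun x hx => hv x ((hmem₁ x).2 hx)) hlt hgap
  set P := l₁.drop k ++ l₂.take k
  set Q := l₂.drop k ++ l₁.take k
  have hperm : (P ++ Q).Perm (l₁ ++ l₂) := List.perm_drop_append_take_append_drop_append_take k
  have hnodup : (P ++ Q).Nodup := hperm.nodup_iff.2 <| List.nodup_append.2 ⟨hn₁, hn₂,
    fun a ha b hb hab => Set.disjoint_left.1 (hA.2.1 hij) ((hmem₁ a).2 ha) (hab ▸ (hmem₂ b).2 hb)⟩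
  obtain ⟨hP, hQ, hPQ⟩ := List.nodup_append.1 hnodup
  have hsum : (P.map v).sum + (Q.map v).sum = (l₁.map v).sum + (l₂.map v).sum := by
    simpa using (hperm.map v).sum_eq
  refine ⟨{x | x ∈ P}, {x | x ∈ Q}, hA.update_update hij (hbases k hk).1 (hbases k hk).2
    (Set.disjoint_left.2 fun x hxP hxQ => hPQ x hxP x hxQ rfl) ?_, ?_, ?_⟩
  · ext x
    simp only [Set.mem_union, Set.mem_ofPred_eq, hmem₁, hmem₂, ← List.mem_append, hperm.mem_iff]
  · rwa [← hs₁, setVal_setOf_mem v hn₁, setVal_setOf_mem v hP]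
  · rw [← hs₁, setVal_setOf_mem v hn₁, setVal_setOf_mem v hQ]
    linarith

theorem sortedVals_lex_update_update {n : ℕ} (v : α → ℝ) (A : Fin n → Set α) {i j : Fin n}
    (hij : i ≠ j) {W₁ W₂ : Set α} (hle : setVal v (A i) ≤ setVal v (A j))
    (h₁ : setVal v (A i) < setVal v W₁) (h₂ : setVal v (A i) < setVal v W₂) :
    List.Lex (· < ·) (sortedVals v A) (sortedVals v (update (update A i W₁) j W₂)) := by
  refine List.lex_lt_of_append_pair_perm List.sortedLE_mergeSort.pairwise
    List.sortedLE_mergeSort.pairwise ?_ hle h₁ h₂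
  have hvals : (fun t => setVal v (update (update A i W₁) j W₂ t)) =
      update (update (fun t => setVal v (A t)) i (setVal v W₁)) j (setVal v W₂) := by
    funext t
    simp only [update_apply]
    split_ifs <;> rfl
  rw [sortedVals, sortedVals, hvals]
  exact ((List.mergeSort_perm _ _).append_right _).trans
    ((List.ofFn_append_pair_perm_update_update _ hij _ _).trans
      ((List.mergeSort_perm _ _).symm.append_right _))

/-- Assuming Gabow's conjecture, for identical additive nonnegative valuations, any
feasible allocation maximizing the sorted vector of bundle values lexicographically
is EF1. -/
theorem gabow_implies_lexmax_EF1 (hGabow : GabowConjecture α)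
    (M : Matroid α) [M.Finite] (n : ℕ) (v : α → ℝ) (hv : ∀ g ∈ M.E, 0 ≤ v g)
    (A : Fin n → Set α) (hA : IsBasePartition M n A)
    (hlexmax : ∀ A' : Fin n → Set α, IsBasePartition M n A' →
      ¬ List.Lex (· < ·) (sortedVals v A) (sortedVals v A')) :
    EF1 (fun _ : Fin n => v) A := by
  intro i j ⟨g, hg⟩
  by_contra! hno
  have hvA (t : Fin n) : ∀ g ∈ A t, 0 ≤ v g := fun g hg => hv g ((hA.1 t).subset_ground hg)
  have hgap : ∀ g ∈ A j, setVal v (A i) + v g < setVal v (A j) := fun g hg => by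
    rw [setVal_eq_add_setVal_diff_singleton v (M.ground_finite.subset (hA.1 j).subset_ground) hg]
    linarith [hno g hg]
  have hlt : setVal v (A i) < setVal v (A j) := by linarith [hgap g hg, hvA j g hg]
  have hij : i ≠ j := by
    rintro rfl
    exact hlt.false
  obtain ⟨W₁, W₂, hA', h₁, h₂⟩ := hA.exists_update_update_lt hGabow hij (hvA i) hlt hgap
  exact hlexmax _ hA' (sortedVals_lex_update_update v A hij hlt.le h₁ h₂)
end
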